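/- arXiv:2107.07912 — 6 statements merged into one kernel-verified Lean document; each statement's English description precedes it below -/
import Mathlib

section
/- Let A = (α_{jr}) and B = (β_{jr}) be k×n generator matrices in standard form of k-dimensional linear codes 𝒜 and 𝒝 of length n over F_q, and let σ_1,...,σ_n be permutations of F_q such that (σ_1(u_1),...,σ_n(u_n)) ∈ 𝒝 for every u = (u_1,...,u_n) ∈ 𝒜. Then for every a = (a_1,...,a_k) ∈ F_q^k and every r ∈ {k+1,...,n}, one has Σ_{j=1}^k β_{jr} σ_j(a_j) = σ_r(Σ_{j=1}^k α_{jr} a_j). -/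
/-- A `k × n` matrix is in *standard form* if its first `k` columns form the identity. -/
def StandardForm {F : Type*} [Zero F] [One F] {k n : ℕ} (hkn : k ≤ n)
    (G : Matrix (Fin k) (Fin n) F) : Prop :=
  ∀ i j : Fin k, G i (Fin.castLE hkn j) = if i = j then 1 else 0

lemma vecMul_castLE {F : Type*} [Field F] {k n : ℕ} (hkn : k ≤ n)
    {G : Matrix (Fin k) (Fin n) F} (hG : StandardForm hkn G)
    (a : Fin k → F) (j : Fin k) :
    Matrix.vecMul a G (Fin.castLE hkn j) = a j := by
  simp only [Matrix.vecMul, dotProduct]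
  rw [Finset.sum_eq_single j]
  · rw [hG j j]; simp
  · intro b _ hb; rw [hG b j]; simp [hb]
  · simp

/-- If `A = (α_{jr})` and `B = (β_{jr})` are generator matrices in standard form of linear
codes `𝒜` and `𝒝`, and permutations `σ 1, ..., σ n` of `F_q` carry every codeword of `𝒜`
coordinatewise into `𝒝`, then for every `a ∈ F_q^k` and every `r ∈ {k+1,...,n}`,
`∑ j, β_{jr} σ_j(a_j) = σ_r (∑ j, α_{jr} a_j)`. -/
theorem sum_beta_sigma_eq_sigma_sum
    {k n : ℕ} (hkn : k ≤ n)
    (F : Type*) [Field F] [Fintype F]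
    (A B : Matrix (Fin k) (Fin n) F)
    (hA : StandardForm hkn A) (hB : StandardForm hkn B)
    (σ : Fin n → Equiv.Perm F)
    (hσ : ∀ u ∈ Set.range (fun a : Fin k → F => Matrix.vecMul a A),
      (fun i => σ i (u i)) ∈ Set.range (fun a : Fin k → F => Matrix.vecMul a B))
    (a : Fin k → F) (r : Fin n) (hr : k ≤ (r : ℕ)) :
    ∑ j : Fin k, B j r * σ (Fin.castLE hkn j) (a j) =
      σ r (∑ j : Fin k, A j r * a j) := by
  obtain ⟨b, hb⟩ := hσ (Matrix.vecMul a A) ⟨a, rfl⟩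
  have hbj : ∀ j : Fin k, b j = σ (Fin.castLE hkn j) (a j) := by
    intro j
    have := congrFun hb (Fin.castLE hkn j)
    simp only at this
    rw [vecMul_castLE hkn hB, vecMul_castLE hkn hA] at this
    exact this
  have hr' := congrFun hb r
  simp only at hr'
  simp only [Matrix.vecMul, dotProduct] at hr'
  calc ∑ j : Fin k, B j r * σ (Fin.castLE hkn j) (a j)
      = ∑ j : Fin k, b j * B j r := by
        refine Finset.sum_congr rfl fun j _ => ?_
        rw [hbj j, mul_comm]
    _ = σ r (∑ j : Fin k, a j * A j r) := hr'
    _ = σ r (∑ j : Fin k, A j r * a j) := by simp_rw [mul_comm]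
end

section
/- Let A = (α_{jr}) and B = (β_{jr}) be k×n generator matrices in standard form of k-dimensional linear codes 𝒜 and 𝒝 of length n over F_q, and let σ_1,...,σ_n be permutations of F_q such that (σ_1(u_1),...,σ_n(u_n)) ∈ 𝒝 for every u = (u_1,...,u_n) ∈ 𝒜. Then for every a = (a_1,...,a_k) ∈ F_q^k and every r ∈ {k+1,...,n}, one has Σ_{j=1}^k σ_r(α_{jr} a_j) − (k−1) σ_r(0) = σ_r(Σ_{j=1}^k α_{jr} a_j). -/
/-!
A codeword `v` of a code with generator matrix `B` in standard form is `b B`, where `b` is read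
off the first `k` coordinates of `v`. Applied to the image of `c A` under the `σ_i`, this shows
that `f c := σ_r (∑ j, α_{jr} c_j)` is separable: `f c = ∑ j, τ_j (c_j)`. Then
`f (a_j e_j) - f 0 = τ_j (a_j) - τ_j (0)`, and summing over `j` gives `f a - f 0`.
-/

open Matrix

theorem sum_apply_single_eq_of_separable {ι M N : Type*} [Fintype ι] [DecidableEq ι] [Zero M]
    [AddCommGroup N] (f : (ι → M) → N) (g : ι → M → N) (hf : ∀ c, f c = ∑ i, g i (c i))
    (c : ι → M) :
    ∑ i, f (Pi.single i (c i)) = f c + ((Fintype.card ι : ℤ) - 1) • f 0 := by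
  have hsingle : ∀ i, f (Pi.single i (c i)) - f 0 = g i (c i) - g i 0 := by
    intro i
    rw [hf, hf, ← Finset.sum_sub_distrib, Finset.sum_eq_single i (fun j _ hj => by simp [hj])
      (by simp)]
    simp
  have hsum : ∑ i, (f (Pi.single i (c i)) - f 0) = f c - f 0 := by
    rw [Finset.sum_congr rfl fun i _ => hsingle i, Finset.sum_sub_distrib, ← hf, hf 0]
    rfl
  rw [Finset.sum_sub_distrib, Finset.sum_const, Finset.card_univ, sub_eq_iff_eq_add] at hsum
  rw [hsum, sub_smul, one_smul, natCast_zsmul]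
  abel

namespace StandardForm

variable {R : Type*} {k n : ℕ} {hkn : k ≤ n}

theorem vecMul_apply_castLE [NonAssocSemiring R] {G : Matrix (Fin k) (Fin n) R}
    (hG : StandardForm hkn G) (c : Fin k → R) (j : Fin k) :
    (c ᵥ* G) (Fin.castLE hkn j) = c j := by
  simp [vecMul, dotProduct, hG _ j]

theorem apply_vecMul_eq_sum [NonAssocSemiring R] {A B : Matrix (Fin k) (Fin n) R}
    (hA : StandardForm hkn A) (hB : StandardForm hkn B) (φ : Fin n → R → R)
    (hφ : ∀ u ∈ Set.range (fun a : Fin k → R => a ᵥ* A),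
      (fun i => φ i (u i)) ∈ Set.range (fun a : Fin k → R => a ᵥ* B))
    (c : Fin k → R) (r : Fin n) :
    φ r ((c ᵥ* A) r) = ∑ j, φ (Fin.castLE hkn j) (c j) * B j r := by
  obtain ⟨b, hb : b ᵥ* B = fun i => φ i ((c ᵥ* A) i)⟩ := hφ (c ᵥ* A) ⟨c, rfl⟩
  have hb_eq : ∀ j, b j = φ (Fin.castLE hkn j) (c j) := fun j => by
    rw [← hB.vecMul_apply_castLE b j, hb, ← hA.vecMul_apply_castLE c j]
  rw [← congrFun hb r]
  simp only [vecMul, dotProduct, hb_eq]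

end StandardForm

theorem sum_sigma_sub_eq_sigma_sum_general
    {k n : ℕ} (hkn : k ≤ n)
    (F : Type*) [Field F]
    (A B : Matrix (Fin k) (Fin n) F)
    (hA : StandardForm hkn A) (hB : StandardForm hkn B)
    (σ : Fin n → Equiv.Perm F)
    (hσ : ∀ u ∈ Set.range (fun a : Fin k → F => Matrix.vecMul a A),
      (fun i => σ i (u i)) ∈ Set.range (fun a : Fin k → F => Matrix.vecMul a B))
    (a : Fin k → F) (r : Fin n) :
    (∑ j : Fin k, σ r (A j r * a j)) - ((k : ℤ) - 1) • σ r 0 =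
      σ r (∑ j : Fin k, A j r * a j) := by
  have hsep := sum_apply_single_eq_of_separable (fun c => σ r ((c ᵥ* A) r))
    (fun j x => σ (Fin.castLE hkn j) x * B j r)
    (StandardForm.apply_vecMul_eq_sum hA hB (fun i => σ i) hσ · r) a
  simp only [single_vecMul, Pi.smul_apply, row_apply, smul_eq_mul, zero_vecMul, Pi.zero_apply,
    Fintype.card_fin] at hsep
  have hcol : (a ᵥ* A) r = ∑ j, A j r * a j := by simp [vecMul, dotProduct, mul_comm]
  rw [sub_eq_iff_eq_add, ← hcol]
  simpa only [mul_comm (a _)] using hsep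

/-- If `A = (α_{jr})` and `B = (β_{jr})` are generator matrices in standard form of linear
codes `𝒜` and `𝒝`, and permutations `σ 1, ..., σ n` of `F_q` carry every codeword of `𝒜`
coordinatewise into `𝒝`, then for every `a ∈ F_q^k` and every `r ∈ {k+1,...,n}`,
`∑ j, σ_r(α_{jr} a_j) - (k-1) σ_r(0) = σ_r (∑ j, α_{jr} a_j)`. -/
theorem sum_sigma_sub_eq_sigma_sum
    {k n : ℕ} (hkn : k ≤ n)
    (F : Type*) [Field F] [Fintype F]
    (A B : Matrix (Fin k) (Fin n) F)
    (hA : StandardForm hkn A) (hB : StandardForm hkn B)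
    (σ : Fin n → Equiv.Perm F)
    (hσ : ∀ u ∈ Set.range (fun a : Fin k → F => Matrix.vecMul a A),
      (fun i => σ i (u i)) ∈ Set.range (fun a : Fin k → F => Matrix.vecMul a B))
    (a : Fin k → F) (r : Fin n) (hr : k ≤ (r : ℕ)) :
    (∑ j : Fin k, σ r (A j r * a j)) - ((k : ℤ) - 1) • σ r 0 =
      σ r (∑ j : Fin k, A j r * a j) :=
  sum_sigma_sub_eq_sigma_sum_general hkn F A B hA hB σ hσ a r
end

section
/- Let 𝒜 and 𝒝 be k-dimensional linear codes of length n over F_q that are equivalent, and suppose 𝒜 and 𝒝 admit generator matrices A and B in standard form all of whose columns have weight one. Then 𝒜 and 𝒝 are linearly equivalent. -/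
/-- Two codes `A, B ⊆ F^n` are *equivalent* if there exist a permutation `α` of the
coordinate positions and permutations `σ i` of the alphabet `F` such that the map
`u ↦ (i ↦ σ i (u (α i)))` sends `A` onto `B`. -/
def CodeEquiv (F : Type*) (n : ℕ) (A B : Set (Fin n → F)) : Prop :=
  ∃ (α : Equiv.Perm (Fin n)) (σ : Fin n → Equiv.Perm F),
    (fun u : Fin n → F => fun i => σ i (u (α i))) '' A = B

/-- Two linear codes `A, B ⊆ F^n` are *linearly equivalent* if they are equivalent with
every coordinate permutation of the form `x ↦ λᵢ * x` for some nonzero `λᵢ ∈ F`. -/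
def LinearCodeEquiv (F : Type*) [Field F] (n : ℕ) (A B : Set (Fin n → F)) : Prop :=
  ∃ (α : Equiv.Perm (Fin n)) (lam : Fin n → F),
    (∀ i, lam i ≠ 0) ∧
    (fun u : Fin n → F => fun i => lam i * u (α i)) '' A = B

/-- The *weight* of the `r`-th column of a matrix `G` is the number of nonzero entries
in that column. -/
def colWeight {F : Type*} [Zero F] [DecidableEq F] {k n : ℕ}
    (G : Matrix (Fin k) (Fin n) F) (r : Fin n) : ℕ :=
  (Finset.univ.filter fun j : Fin k => G j r ≠ 0).card

/-- If two `k`-dimensional linear codes `𝒜` and `𝒝` of length `n` over `F_q` are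
equivalent and admit generator matrices `A` and `B` in standard form all of whose columns
have weight one, then `𝒜` and `𝒝` are linearly equivalent. -/
theorem linearEquiv_of_equiv_of_colWeight_one
    {k n : ℕ} (hkn : k ≤ n)
    (F : Type*) [Field F] [Fintype F] [DecidableEq F]
    (𝒜 ℬ : Submodule F (Fin n → F))
    (hdimA : Module.finrank F 𝒜 = k) (hdimB : Module.finrank F ℬ = k)
    (A B : Matrix (Fin k) (Fin n) F)
    (hA : StandardForm hkn A) (hB : StandardForm hkn B)
    (hgenA : (𝒜 : Set (Fin n → F)) = Set.range (fun a : Fin k → F => Matrix.vecMul a A))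
    (hgenB : (ℬ : Set (Fin n → F)) = Set.range (fun a : Fin k → F => Matrix.vecMul a B))
    (hwA : ∀ r : Fin n, colWeight A r = 1) (hwB : ∀ r : Fin n, colWeight B r = 1)
    (hequiv : CodeEquiv F n (𝒜 : Set (Fin n → F)) (ℬ : Set (Fin n → F))) :
    LinearCodeEquiv F n (𝒜 : Set (Fin n → F)) (ℬ : Set (Fin n → F)) := by
  classical
  -- Extract the unique nonzero row index of each column of A and B
  have hA1 : ∀ r, ∃ j, (Finset.univ.filter fun j : Fin k => A j r ≠ 0) = {j} :=
    fun r => Finset.card_eq_one.mp (hwA r)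
  have hB1 : ∀ r, ∃ j, (Finset.univ.filter fun j : Fin k => B j r ≠ 0) = {j} :=
    fun r => Finset.card_eq_one.mp (hwB r)
  choose f hf using hA1
  choose g hg using hB1
  have hA2 : ∀ r j, A j r ≠ 0 ↔ j = f r := by
    intro r j
    constructor
    · intro h
      have : j ∈ (Finset.univ.filter fun j : Fin k => A j r ≠ 0) := by simp [h]
      rw [hf r] at this; simpa using this
    · rintro rfl
      have : f r ∈ ({f r} : Finset (Fin k)) := Finset.mem_singleton_self _
      rw [← hf r] at this; simpa using this
  have hB2 : ∀ r j, B j r ≠ 0 ↔ j = g r := by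
    intro r j
    constructor
    · intro h
      have : j ∈ (Finset.univ.filter fun j : Fin k => B j r ≠ 0) := by simp [h]
      rw [hg r] at this; simpa using this
    · rintro rfl
      have : g r ∈ ({g r} : Finset (Fin k)) := Finset.mem_singleton_self _
      rw [← hg r] at this; simpa using this
  have hcA : ∀ r, A (f r) r ≠ 0 := fun r => (hA2 r (f r)).mpr rfl
  have hcB : ∀ r, B (g r) r ≠ 0 := fun r => (hB2 r (g r)).mpr rfl
  have hAzero : ∀ r j, j ≠ f r → A j r = 0 := by
    intro r j hj
    by_contra h
    exact hj ((hA2 r j).mp h)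
  have hBzero : ∀ r j, j ≠ g r → B j r = 0 := by
    intro r j hj
    by_contra h
    exact hj ((hB2 r j).mp h)
  -- standard form pins down f and g on the first k coordinates
  have hfstd : ∀ j : Fin k, f (Fin.castLE hkn j) = j := by
    intro j
    have : A j (Fin.castLE hkn j) ≠ 0 := by
      rw [hA j j]; simp
    exact ((hA2 _ j).mp this).symm
  have hgstd : ∀ j : Fin k, g (Fin.castLE hkn j) = j := by
    intro j
    have : B j (Fin.castLE hkn j) ≠ 0 := by
      rw [hB j j]; simp
    exact ((hB2 _ j).mp this).symm
  -- evaluation of vecMul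
  have hvA : ∀ (a : Fin k → F) (r : Fin n), Matrix.vecMul a A r = a (f r) * A (f r) r := by
    intro a r
    simp only [Matrix.vecMul, dotProduct]
    exact Finset.sum_eq_single (f r) (fun j _ hj => by rw [hAzero r j hj, mul_zero])
      (by simp)
  have hvB : ∀ (b : Fin k → F) (r : Fin n), Matrix.vecMul b B r = b (g r) * B (g r) r := by
    intro b r
    simp only [Matrix.vecMul, dotProduct]
    exact Finset.sum_eq_single (g r) (fun j _ hj => by rw [hBzero r j hj, mul_zero])
      (by simp)
  -- the "i determines i'" relation characterizes fibers of f on 𝒜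
  have hPA : ∀ i i' : Fin n,
      (∀ u ∈ (𝒜 : Set (Fin n → F)), ∀ v ∈ (𝒜 : Set (Fin n → F)), u i = v i → u i' = v i')
        ↔ f i = f i' := by
    intro i i'
    constructor
    · intro h
      by_contra hne
      have h0 : (0 : Fin n → F) ∈ (𝒜 : Set (Fin n → F)) := by
        rw [hgenA]; exact ⟨0, by simp [Matrix.vecMul]⟩
      have hv : Matrix.vecMul (Pi.single (f i') 1) A ∈ (𝒜 : Set (Fin n → F)) := by
        rw [hgenA]; exact ⟨_, rfl⟩
      have h1 : (0 : Fin n → F) i = Matrix.vecMul (Pi.single (f i') 1) A i := by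
        rw [hvA]
        simp [Pi.single_eq_of_ne hne]
      have h2 := h 0 h0 _ hv h1
      rw [hvA] at h2
      simp at h2
      exact hcA i' h2.symm
    · intro hff u hu v hv huv
      rw [hgenA] at hu hv
      obtain ⟨a, rfl⟩ := hu
      obtain ⟨a', rfl⟩ := hv
      simp only [hvA] at huv ⊢
      have : a (f i) = a' (f i) := mul_right_cancel₀ (hcA i) huv
      rw [← hff, this]
  have hPB : ∀ i i' : Fin n,
      (∀ u ∈ (ℬ : Set (Fin n → F)), ∀ v ∈ (ℬ : Set (Fin n → F)), u i = v i → u i' = v i')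
        ↔ g i = g i' := by
    intro i i'
    constructor
    · intro h
      by_contra hne
      have h0 : (0 : Fin n → F) ∈ (ℬ : Set (Fin n → F)) := by
        rw [hgenB]; exact ⟨0, by simp [Matrix.vecMul]⟩
      have hv : Matrix.vecMul (Pi.single (g i') 1) B ∈ (ℬ : Set (Fin n → F)) := by
        rw [hgenB]; exact ⟨_, rfl⟩
      have h1 : (0 : Fin n → F) i = Matrix.vecMul (Pi.single (g i') 1) B i := by
        rw [hvB]
        simp [Pi.single_eq_of_ne hne]
      have h2 := h 0 h0 _ hv h1
      rw [hvB] at h2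
      simp at h2
      exact hcB i' h2.symm
    · intro hgg u hu v hv huv
      rw [hgenB] at hu hv
      obtain ⟨b, rfl⟩ := hu
      obtain ⟨b', rfl⟩ := hv
      simp only [hvB] at huv ⊢
      have : b (g i) = b' (g i) := mul_right_cancel₀ (hcB i) huv
      rw [← hgg, this]
  -- the equivalence transfers the relation
  obtain ⟨α, σ, hψ⟩ := hequiv
  have key : ∀ i i' : Fin n, g i = g i' ↔ f (α i) = f (α i') := by
    intro i i'
    rw [← hPB i i', ← hPA (α i) (α i')]
    constructor
    · intro h u hu v hv huv
      have hub : (fun j => σ j (u (α j))) ∈ (ℬ : Set (Fin n → F)) := by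
        rw [← hψ]; exact ⟨u, hu, rfl⟩
      have hvb : (fun j => σ j (v (α j))) ∈ (ℬ : Set (Fin n → F)) := by
        rw [← hψ]; exact ⟨v, hv, rfl⟩
      have := h _ hub _ hvb (by simp [huv])
      exact (σ i').injective this
    · intro h w hw z hz hwz
      rw [← hψ] at hw hz
      obtain ⟨u, hu, rfl⟩ := hw
      obtain ⟨v, hv, rfl⟩ := hz
      have huv : u (α i) = v (α i) := (σ i).injective hwz
      have := h u hu v hv huv
      simp [this]
  -- construct the permutation π of Fin k
  set π0 : Fin k → Fin k := fun j => f (α (Fin.castLE hkn j)) with hπ0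
  have hπinj : Function.Injective π0 := by
    intro j j' h
    have : g (Fin.castLE hkn j) = g (Fin.castLE hkn j') := (key _ _).mpr h
    rwa [hgstd, hgstd] at this
  have hπbij : Function.Bijective π0 := (Finite.injective_iff_bijective).mp hπinj
  set π : Equiv.Perm (Fin k) := Equiv.ofBijective π0 hπbij with hπ
  have hπapp : ∀ j, π j = π0 j := fun j => rfl
  have hπg : ∀ i : Fin n, π0 (g i) = f (α i) := by
    intro i
    have : g (Fin.castLE hkn (g i)) = g i := hgstd (g i)
    have h2 := (key (Fin.castLE hkn (g i)) i).mp this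
    exact h2
  -- the scalars
  refine ⟨α, fun i => B (g i) i * (A (f (α i)) (α i))⁻¹, fun i =>
    mul_ne_zero (hcB i) (inv_ne_zero (hcA (α i))), ?_⟩
  rw [hgenA, hgenB]
  ext w
  constructor
  · rintro ⟨u, ⟨a, rfl⟩, rfl⟩
    refine ⟨fun j => a (π0 j), ?_⟩
    funext i
    simp only [hvA, hvB, hπg]
    field_simp [hcA (α i)]
  · rintro ⟨b, rfl⟩
    refine ⟨Matrix.vecMul (fun j => b (π.symm j)) A, ⟨_, rfl⟩, ?_⟩
    funext i
    simp only [hvA, hvB]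
    have : (f (α i)) = π (g i) := (hπg i).symm
    rw [this, Equiv.symm_apply_apply]
    have h2 : A (f (α i)) (α i) = A (π (g i)) (α i) := by rw [this]
    rw [← h2]
    field_simp [hcA (α i)]
end

section
/- Let p be a prime, q = p^h, and let A = (α_{jr}) and B = (β_{jr}) be k×n generator matrices in standard form of k-dimensional linear codes over F_q. Suppose that for each j ∈ {1,...,n} the map σ_j(x) = Σ_{i=0}^{h−1} c_{ji} x^{p^i} satisfies Σ_{j=1}^k β_{jr} σ_j(a_j) = σ_r(Σ_{j=1}^k α_{jr} a_j) for all (a_1,...,a_k) ∈ F_q^k and all r ∈ {k+1,...,n}. Then for all j ∈ {1,...,k}, all r ∈ {k+1,...,n} and all i ∈ {0,...,h−1}, one has β_{jr} c_{ji} = c_{ri} α_{jr}^{p^i}. -/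
/-- Let `A = (α_{jr})` and `B = (β_{jr})` be generator matrices in standard form of
linear codes over `F_q`, `q = p^h`, and suppose the maps
`σ_j(x) = ∑_{i=0}^{h-1} c_{ji} x^{p^i}` satisfy
`∑_j β_{jr} σ_j(a_j) = σ_r(∑_j α_{jr} a_j)` for all `a ∈ F_q^k` and `r ∈ {k+1,...,n}`.
Then `β_{jr} c_{ji} = c_{ri} α_{jr}^{p^i}` for all `j ∈ {1,...,k}`, `r ∈ {k+1,...,n}`
and `i ∈ {0,...,h-1}`. -/
theorem coefficient_relation
    (p h : ℕ) [Fact p.Prime]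
    {k n : ℕ} (hkn : k ≤ n)
    (F : Type*) [Field F] [Fintype F] (hcard : Fintype.card F = p ^ h)
    (A B : Matrix (Fin k) (Fin n) F)
    (hA : StandardForm hkn A) (hB : StandardForm hkn B)
    (c : Fin n → Fin h → F)
    (heq : ∀ (a : Fin k → F) (r : Fin n), k ≤ (r : ℕ) →
      ∑ j : Fin k, B j r * (∑ i : Fin h, c (Fin.castLE hkn j) i * (a j) ^ p ^ (i : ℕ)) =
        ∑ i : Fin h, c r i * (∑ j : Fin k, A j r * a j) ^ p ^ (i : ℕ)) :
    ∀ (j : Fin k) (r : Fin n), k ≤ (r : ℕ) → ∀ i : Fin h,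
      B j r * c (Fin.castLE hkn j) i = c r i * (A j r) ^ p ^ (i : ℕ) := by
  classical
  intro j r hr i
  have hp2 : 2 ≤ p := (Fact.out : p.Prime).two_le
  set d : Fin h → F := fun i => B j r * c (Fin.castLE hkn j) i - c r i * (A j r) ^ p ^ (i : ℕ)
    with hd
  have hx : ∀ x : F, ∑ i : Fin h, d i * x ^ p ^ (i : ℕ) = 0 := by
    intro x
    have h1 := heq (fun j' => if j' = j then x else 0) r hr
    have hL : ∑ j' : Fin k, B j' r *
        (∑ i : Fin h, c (Fin.castLE hkn j') i * (if j' = j then x else 0) ^ p ^ (i : ℕ)) =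
        B j r * ∑ i : Fin h, c (Fin.castLE hkn j) i * x ^ p ^ (i : ℕ) := by
      rw [Finset.sum_eq_single j]
      · simp
      · intro b _ hb
        have : ∀ i : Fin h, c (Fin.castLE hkn b) i * (0 : F) ^ p ^ (i : ℕ) = 0 := by
          intro i
          rw [zero_pow (by positivity), mul_zero]
        simp [hb, this]
      · simp
    have hR : ∑ j' : Fin k, A j' r * (if j' = j then x else 0) = A j r * x := by
      simp [mul_ite]
    rw [hL, hR] at h1
    simp only [hd, sub_mul, Finset.sum_sub_distrib, Finset.mul_sum] at *
    rw [sub_eq_zero]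
    calc ∑ i : Fin h, B j r * c (Fin.castLE hkn j) i * x ^ p ^ (i : ℕ)
        = ∑ i : Fin h, B j r * (c (Fin.castLE hkn j) i * x ^ p ^ (i : ℕ)) := by
          simp [mul_assoc]
      _ = ∑ i : Fin h, c r i * (A j r * x) ^ p ^ (i : ℕ) := h1
      _ = ∑ i : Fin h, c r i * (A j r) ^ p ^ (i : ℕ) * x ^ p ^ (i : ℕ) := by
          simp [mul_pow, mul_assoc]
  -- build the polynomial
  set P : Polynomial F := ∑ m : Fin h, Polynomial.C (d m) * Polynomial.X ^ p ^ (m : ℕ) with hP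
  have hPeval : ∀ x : F, P.eval x = 0 := by
    intro x
    rw [hP]
    simpa [Polynomial.eval_finset_sum] using hx x
  have hdeg : P.natDegree < Fintype.card F := by
    rw [hcard]
    have h1 : P.natDegree ≤ p ^ (h - 1) := by
      apply Polynomial.natDegree_sum_le_of_forall_le
      intro m _
      refine (Polynomial.natDegree_C_mul_le _ _).trans ?_
      rw [Polynomial.natDegree_X_pow]
      exact Nat.pow_le_pow_right (by omega) (Nat.le_pred_of_lt m.isLt)
    have hh : 0 < h := i.pos
    have h2 : p ^ (h - 1) < p ^ h := Nat.pow_lt_pow_right (by omega) (by omega)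
    omega
  have hP0 : P = 0 :=
    Polynomial.eq_zero_of_natDegree_lt_card_of_eval_eq_zero P Function.injective_id hPeval hdeg
  have hcoeff : P.coeff (p ^ (i : ℕ)) = d i := by
    rw [hP, Polynomial.finset_sum_coeff]
    rw [Finset.sum_eq_single i]
    · simp
    · intro b _ hb
      have : p ^ (b : ℕ) ≠ p ^ (i : ℕ) := fun hc => hb (Fin.ext
        (Nat.pow_right_injective hp2 hc))
      simp [Polynomial.coeff_X_pow, this, Ne.symm this]
    · simp
  rw [hP0, Polynomial.coeff_zero] at hcoeff
  have h0 : B j r * c (Fin.castLE hkn j) i - c r i * A j r ^ p ^ (i : ℕ) = 0 := hcoeff.symm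
  exact sub_eq_zero.mp h0
end

section
/- Let p be a prime, q = p^h, and let A = (α_{jr}) and B = (β_{jr}) be k×n generator matrices in standard form of k-dimensional linear codes over F_q. Suppose that for each j ∈ {1,...,n} the map σ_j(x) = Σ_{i=0}^{h−1} c_{ji} x^{p^i} is a permutation of F_q, and that Σ_{j=1}^k β_{jr} σ_j(a_j) = σ_r(Σ_{j=1}^k α_{jr} a_j) holds for all (a_1,...,a_k) ∈ F_q^k and all r ∈ {k+1,...,n}. Then for all j ∈ {1,...,k} and r ∈ {k+1,...,n}, α_{jr} = 0 if and only if β_{jr} = 0. -/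
/-- Let `A = (α_{jr})` and `B = (β_{jr})` be generator matrices in standard form of
linear codes over `F_q`, `q = p^h`, and suppose the maps
`σ_j(x) = ∑_{i=0}^{h-1} c_{ji} x^{p^i}` are permutations of `F_q` satisfying
`∑_j β_{jr} σ_j(a_j) = σ_r(∑_j α_{jr} a_j)` for all `a ∈ F_q^k` and `r ∈ {k+1,...,n}`.
Then `α_{jr} = 0` if and only if `β_{jr} = 0`, for all `j ∈ {1,...,k}` and
`r ∈ {k+1,...,n}`. -/
theorem entry_zero_iff_entry_zero
    (p h : ℕ) [Fact p.Prime]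
    {k n : ℕ} (hkn : k ≤ n)
    (F : Type*) [Field F] [Fintype F] (hcard : Fintype.card F = p ^ h)
    (A B : Matrix (Fin k) (Fin n) F)
    (hA : StandardForm hkn A) (hB : StandardForm hkn B)
    (c : Fin n → Fin h → F)
    (hperm : ∀ j : Fin n,
      Function.Bijective (fun x : F => ∑ i : Fin h, c j i * x ^ p ^ (i : ℕ)))
    (heq : ∀ (a : Fin k → F) (r : Fin n), k ≤ (r : ℕ) →
      ∑ j : Fin k, B j r * (∑ i : Fin h, c (Fin.castLE hkn j) i * (a j) ^ p ^ (i : ℕ)) =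
        ∑ i : Fin h, c r i * (∑ j : Fin k, A j r * a j) ^ p ^ (i : ℕ)) :
    ∀ (j : Fin k) (r : Fin n), k ≤ (r : ℕ) → (A j r = 0 ↔ B j r = 0) := by
  intro j r hr
  have hp : p ≠ 0 := (Fact.out : p.Prime).pos.ne'
  have hz : ∀ (d : Fin n) (x : F), x = 0 →
      ∑ i : Fin h, c d i * x ^ p ^ (i : ℕ) = 0 := by
    intro d x hx
    subst hx
    refine Finset.sum_eq_zero fun i _ => ?_
    rw [zero_pow (pow_ne_zero _ hp), mul_zero]
  have key : ∀ x : F, B j r * (∑ i : Fin h, c (Fin.castLE hkn j) i * x ^ p ^ (i : ℕ))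
      = ∑ i : Fin h, c r i * (A j r * x) ^ p ^ (i : ℕ) := by
    intro x
    have := heq (fun j' => if j' = j then x else 0) r hr
    rw [Finset.sum_eq_single j (fun j' _ hj' => by
        simp only [if_neg hj']
        rw [hz _ _ rfl, mul_zero]) (by simp)] at this
    rw [Finset.sum_eq_single j (fun j' _ hj' => by simp [if_neg hj'])
        (by simp)] at this
    simpa using this
  constructor
  · intro hA0
    -- RHS is 0 for all x, so B j r * σ_j x = 0 for all x; use surjectivity
    obtain ⟨x, hx⟩ := (hperm (Fin.castLE hkn j)).2 1
    have := key x
    rw [hA0] at this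
    simp only at hx
    rw [hx, mul_one] at this
    rw [this]
    exact hz r _ (zero_mul x)
  · intro hB0
    have := key 1
    rw [hB0, zero_mul] at this
    have h0 : (∑ i : Fin h, c r i * (A j r * 1) ^ p ^ (i : ℕ))
        = ∑ i : Fin h, c r i * (0:F) ^ p ^ (i : ℕ) := by
      rw [← this, hz r 0 rfl]
    have := (hperm r).1 h0
    simpa using this
end

section
/- Let p be a prime, q = p^h, and let C be an additive MDS code of length n over F_q with |C| = q^k, where 1 ≤ k < n. Then C is additively equivalent to an additive code whose generator matrix, viewed as a kh × nh matrix over F_p upon identifying F_q with F_p^h, has its first kh columns equal to the identity matrix I_{kh} and in which, for each r ∈ {k+1,...,n} and each j ∈ {1,...,k}, the h×h block over F_p in block-row j and block-column r is a non-singular matrix. -/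
/-- Two codes `A, B ⊆ F^n` are *additively equivalent* if there exist a permutation `α`
of the coordinate positions and additive permutations `σ i` of the alphabet `F`
(bijections satisfying `σ i (x + y) = σ i x + σ i y`) such that the map
`u ↦ (i ↦ σ i (u (α i)))` sends `A` onto `B`. -/
def AddCodeEquiv (F : Type*) [Add F] (n : ℕ) (A B : Set (Fin n → F)) : Prop :=
  ∃ (α : Equiv.Perm (Fin n)) (σ : Fin n → Equiv.Perm F),
    (∀ (i : Fin n) (x y : F), σ i (x + y) = σ i x + σ i y) ∧
    (fun u : Fin n → F => fun i => σ i (u (α i))) '' A = B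

/-- A code `C ⊆ F^n` is *MDS* if it has a minimum distance `d` (the least Hamming
distance between distinct codewords) and `|C| = |F|^(n - d + 1)`. -/
def IsMDS (F : Type*) [Fintype F] [DecidableEq F] (n : ℕ) (C : Set (Fin n → F)) : Prop :=
  ∃ d : ℕ,
    IsLeast {e : ℕ | ∃ u ∈ C, ∃ v ∈ C, u ≠ v ∧ hammingDist u v = e} d ∧
    Nat.card C = Fintype.card F ^ (n - d + 1)

/-! An MDS code of size `|F|^k` has minimum distance `n - k + 1`, so a codeword is determined by
any `k` of its entries; for an additive code, restriction to the first `k` coordinates is then an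
additive bijection `C ≃+ F^k`. Composing it with an `F_p`-coordinatisation `F ≃+ F_p^h` gives
`C ≃+ F_p^{kh}`, and the preimages of the standard basis vectors form a generator matrix of `C`
itself whose first `kh` columns are the identity. A block in column `r ≥ k` and block-row `j` is
non-singular: a vector in its left kernel yields a codeword vanishing in column `r` and in the
`k - 1` first columns other than `j`, hence the zero codeword. -/

open Finset Matrix

theorem AddCodeEquiv.refl (F : Type*) [AddMonoid F] (n : ℕ) (A : Set (Fin n → F)) :
    AddCodeEquiv F n A A :=
  ⟨1, fun _ => Equiv.refl F, fun _ _ _ => rfl, Set.image_id A⟩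

theorem hammingDist_le_card_compl_of_eqOn {ι β : Type*} [Fintype ι] [DecidableEq ι]
    [DecidableEq β] {u v : ι → β} {S : Finset ι} (h : ∀ i ∈ S, u i = v i) :
    hammingDist u v ≤ #Sᶜ :=
  card_le_card fun i hi => mem_compl.mpr fun hiS => (mem_filter.mp hi).2 (h i hiS)

section MDS

variable {F : Type*} [Fintype F] [DecidableEq F] [Nontrivial F] {n k : ℕ}

theorem IsMDS.eq_of_eqOn {C : Set (Fin n → F)} (hC : IsMDS F n C)
    (hCk : Nat.card C = Fintype.card F ^ k) {u v : Fin n → F} (hu : u ∈ C) (hv : v ∈ C)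
    {S : Finset (Fin n)} (hS : k ≤ #S) (huv : ∀ i ∈ S, u i = v i) : u = v := by
  obtain ⟨d, ⟨⟨u₀, -, v₀, -, hne₀, rfl⟩, hleast⟩, hcard⟩ := hC
  have hk : n - hammingDist u₀ v₀ + 1 = k :=
    Nat.pow_right_injective Fintype.one_lt_card (hcard.symm.trans hCk)
  have hpos : 0 < hammingDist u₀ v₀ := hammingDist_pos.mpr hne₀
  have hle : hammingDist u₀ v₀ ≤ n := hammingDist_le_card_fintype.trans_eq (Fintype.card_fin n)
  by_contra hne
  have hmin : hammingDist u₀ v₀ ≤ hammingDist u v := hleast ⟨u, hu, v, hv, hne, rfl⟩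
  have hdist := hammingDist_le_card_compl_of_eqOn huv
  rw [card_compl, Fintype.card_fin] at hdist
  omega

theorem IsMDS.injOn_restrict {C : Set (Fin n → F)} (hC : IsMDS F n C)
    (hCk : Nat.card C = Fintype.card F ^ k) (hkn : k ≤ n) :
    Set.InjOn (fun u (j : Fin k) => u (Fin.castLE hkn j)) C := by
  intro u hu v hv huv
  refine hC.eq_of_eqOn hCk hu hv (S := univ.map (Fin.castLEEmb hkn)) (by simp) ?_
  intro i hi
  obtain ⟨j, -, rfl⟩ := mem_map.mp hi
  exact congrFun huv j

variable [AddGroup F] {C : AddSubgroup (Fin n → F)}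

noncomputable def IsMDS.restrictEquiv (hC : IsMDS F n (C : Set (Fin n → F)))
    (hCk : Nat.card C = Fintype.card F ^ k) (hkn : k ≤ n) : C ≃+ (Fin k → F) :=
  AddEquiv.ofBijective
    (AddMonoidHom.mk' (fun (c : C) j => (c : Fin n → F) (Fin.castLE hkn j)) fun _ _ => rfl)
    ((Nat.bijective_iff_injective_and_card _).mpr
      ⟨fun a b hab => Subtype.ext (hC.injOn_restrict hCk hkn a.2 b.2 hab), by
        rw [hCk, Nat.card_fun, Nat.card_eq_fintype_card, Nat.card_eq_fintype_card,
          Fintype.card_fin]⟩)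

end MDS

theorem exists_addEquiv_pi_zmod_of_card_eq {p h : ℕ} [Fact p.Prime] (F : Type*) [Field F]
    [Fintype F] (hcard : Fintype.card F = p ^ h) : Nonempty (F ≃+ (Fin h → ZMod p)) := by
  have := charP_of_card_eq_prime_pow hcard
  let := ZMod.algebra F p
  have hcard' := Module.card_eq_pow_finrank (K := ZMod p) (V := F)
  rw [ZMod.card, hcard] at hcard'
  have hfinrank : Module.finrank (ZMod p) F = h :=
    Nat.pow_right_injective (Fact.out : p.Prime).two_le hcard'.symm
  exact ⟨(Module.finBasisOfFinrankEq (ZMod p) F hfinrank).equivFun.toAddEquiv⟩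

theorem AddEquiv.symm_apply_eq_sum_val_nsmul {p : ℕ} [NeZero p] {M ι : Type*}
    [AddCommMonoid M] [Fintype ι] [DecidableEq ι] (E : M ≃+ (ι → ZMod p)) (w : ι → ZMod p) :
    E.symm w = ∑ i, (w i).val • E.symm (Pi.single i 1) := by
  conv_lhs => rw [← univ_sum_single w]
  rw [map_sum]
  refine sum_congr rfl fun i _ => ?_
  rw [← map_nsmul, ← Pi.single_smul', nsmul_eq_mul, mul_one, ZMod.natCast_zmod_val]

theorem AddEquiv.map_sum_val_nsmul {p : ℕ} [NeZero p] {M ι κ : Type*} [AddCommMonoid M]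
    [Fintype κ] (φ : M ≃+ (ι → ZMod p)) (c : κ → ZMod p) (x : κ → M) :
    φ (∑ t, (c t).val • x t) = c ᵥ* Matrix.of fun t => φ (x t) := by
  ext s
  simp only [map_sum, map_nsmul, Finset.sum_apply, nsmul_eq_mul,
    Pi.mul_apply, Pi.natCast_apply, ZMod.natCast_zmod_val,
    vecMul, dotProduct, of_apply]

section SystematicGenerator

variable {p h n k : ℕ} {F : Type*} [AddCommGroup F] [Fintype F] [DecidableEq F]
  [Nontrivial F] (φ : F ≃+ (Fin h → ZMod p)) {C : AddSubgroup (Fin n → F)}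
  (hC : IsMDS F n (C : Set (Fin n → F))) (hCk : Nat.card C = Fintype.card F ^ k) (hkn : k ≤ n)

noncomputable def IsMDS.coordEquiv : C ≃+ (Fin k × Fin h → ZMod p) :=
  (hC.restrictEquiv hCk hkn).trans <| (AddEquiv.piCongrRight fun _ => φ).trans
    (LinearEquiv.curry ℕ (ZMod p) (Fin k) (Fin h)).toAddEquiv.symm

theorem IsMDS.coordEquiv_apply (c : C) (j : Fin k) (s : Fin h) :
    hC.coordEquiv φ hCk hkn c (j, s) = φ ((c : Fin n → F) (Fin.castLE hkn j)) s :=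
  rfl

noncomputable def IsMDS.systematicRows : Matrix (Fin k × Fin h) (Fin n) F :=
  Matrix.of fun jt => ((hC.coordEquiv φ hCk hkn).symm (Pi.single jt 1) : Fin n → F)

theorem IsMDS.systematicRows_mem (jt : Fin k × Fin h) : hC.systematicRows φ hCk hkn jt ∈ C :=
  Subtype.prop _

theorem IsMDS.sum_val_nsmul_systematicRows [NeZero p] (m : Fin k × Fin h → ZMod p) :
    ∑ jt, (m jt).val • hC.systematicRows φ hCk hkn jt =
      ((hC.coordEquiv φ hCk hkn).symm m : Fin n → F) := by
  rw [AddEquiv.symm_apply_eq_sum_val_nsmul, AddSubgroup.val_finsetSum]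
  rfl

theorem IsMDS.systematicRows_apply_castLE (jt : Fin k × Fin h) (j : Fin k) (s : Fin h) :
    φ (hC.systematicRows φ hCk hkn jt (Fin.castLE hkn j)) s = if jt = (j, s) then 1 else 0 := by
  rw [systematicRows, of_apply, ← hC.coordEquiv_apply φ hCk hkn, AddEquiv.apply_symm_apply,
    Pi.single_comm, Pi.single_apply]

theorem IsMDS.systematicRows_block_castLE (j j' : Fin k) :
    (Matrix.of fun t s => φ (hC.systematicRows φ hCk hkn (j, t) (Fin.castLE hkn j')) s) =
      if j = j' then 1 else 0 := by
  ext t s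
  simp only [of_apply, systematicRows_apply_castLE, Prod.ext_iff]
  split_ifs <;> simp_all [one_apply]

theorem IsMDS.isUnit_systematicRows_block [Fact p.Prime] (j : Fin k) (r : Fin n) (hr : k ≤ r) :
    IsUnit (Matrix.of fun t s => φ (hC.systematicRows φ hCk hkn (j, t) r) s) := by
  rw [isUnit_iff_isUnit_det, isUnit_iff_ne_zero]
  intro hdet
  obtain ⟨c, hc, hcB⟩ := exists_vecMul_eq_zero_iff.mpr hdet
  set u := ∑ t, (c t).val • hC.systematicRows φ hCk hkn (j, t)
  have hφu (i : Fin n) :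
      φ (u i) = c ᵥ* Matrix.of fun t s => φ (hC.systematicRows φ hCk hkn (j, t) i) s := by
    rw [← AddEquiv.map_sum_val_nsmul]
    simp only [u, Finset.sum_apply, Pi.smul_apply]
  have hu_castLE (j' : Fin k) : φ (u (Fin.castLE hkn j')) = if j = j' then c else 0 := by
    rw [hφu, systematicRows_block_castLE]
    split_ifs <;> simp
  have hu : u = 0 := by
    refine hC.eq_of_eqOn hCk (sum_mem fun t _ => nsmul_mem (hC.systematicRows_mem φ hCk hkn _) _)
      C.zero_mem (S := insert r ((univ.erase j).map (Fin.castLEEmb hkn))) ?_ ?_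
    · have hr' : r ∉ (univ.erase j).map (Fin.castLEEmb hkn) := by
        simp only [mem_map, Fin.castLEEmb_apply, not_exists, not_and]
        rintro j' - rfl
        exact hr.not_gt j'.isLt
      rw [card_insert_of_notMem hr', card_map, card_erase_of_mem (mem_univ j), card_univ,
        Fintype.card_fin]
      omega
    · intro i hi
      rcases mem_insert.mp hi with rfl | hi
      · exact φ.injective (by rw [hφu, hcB, Pi.zero_apply, map_zero])
      · obtain ⟨j', hj', rfl⟩ := mem_map.mp hi
        exact φ.injective (by
          rw [Fin.castLEEmb_apply, hu_castLE, if_neg (ne_of_mem_erase hj').symm, Pi.zero_apply,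
            map_zero])
  apply hc
  simpa [hu] using (hu_castLE j).symm

end SystematicGenerator

theorem additiveMDS_standard_generator_matrix_general
    (p h : ℕ) [Fact p.Prime]
    (F : Type*) [Field F] [Fintype F] [DecidableEq F]
    (hcard : Fintype.card F = p ^ h)
    (n k : ℕ) (hkn : k < n)
    (C : AddSubgroup (Fin n → F))
    (hMDS : IsMDS F n (C : Set (Fin n → F)))
    (hCk : Nat.card C = (p ^ h) ^ k) :
    ∃ (D : AddSubgroup (Fin n → F)) (G : Matrix (Fin k × Fin h) (Fin n) F)
      (φ : F ≃+ (Fin h → ZMod p)),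
      AddCodeEquiv F n (C : Set (Fin n → F)) (D : Set (Fin n → F)) ∧
      -- the rows of `G` lie in `D` ...
      (∀ jt : Fin k × Fin h, G jt ∈ D) ∧
      -- ... they span `D` over `F_p` ...
      (∀ x ∈ D, ∃ m : Fin k × Fin h → ZMod p,
        x = ∑ jt : Fin k × Fin h, (m jt).val • G jt) ∧
      -- ... and they are linearly independent over `F_p`
      (∀ m m' : Fin k × Fin h → ZMod p,
        ∑ jt : Fin k × Fin h, (m jt).val • G jt =
          ∑ jt : Fin k × Fin h, (m' jt).val • G jt → m = m') ∧
      -- the first `kh` columns of the `kh × nh` matrix over `F_p` form `I_{kh}`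
      (∀ (jt : Fin k × Fin h) (r : Fin n) (hr : (r : ℕ) < k) (s : Fin h),
        φ (G jt r) s = if jt = (⟨(r : ℕ), hr⟩, s) then 1 else 0) ∧
      -- for `r ∈ {k+1,...,n}` and `j ∈ {1,...,k}` the `h × h` block is non-singular
      (∀ (j : Fin k) (r : Fin n), k ≤ (r : ℕ) →
        IsUnit (Matrix.of fun t s : Fin h => φ (G (j, t) r) s)) := by
  obtain ⟨φ⟩ := exists_addEquiv_pi_zmod_of_card_eq F hcard
  rw [← hcard] at hCk
  set E := hMDS.coordEquiv φ hCk hkn.le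
  refine ⟨C, hMDS.systematicRows φ hCk hkn.le, φ, AddCodeEquiv.refl F n C,
    hMDS.systematicRows_mem φ hCk hkn.le, ?_, ?_, ?_, hMDS.isUnit_systematicRows_block φ hCk hkn.le⟩
  · intro x hx
    refine ⟨E ⟨x, hx⟩, ?_⟩
    rw [hMDS.sum_val_nsmul_systematicRows, E.symm_apply_apply]
  · intro m m' hmm'
    rw [hMDS.sum_val_nsmul_systematicRows, hMDS.sum_val_nsmul_systematicRows] at hmm'
    exact E.symm.injective (Subtype.ext hmm')
  · intro jt r hr s
    exact hMDS.systematicRows_apply_castLE φ hCk hkn.le jt ⟨r, hr⟩ s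

/-- An additive MDS code `C` of length `n` over `F_q`, `q = p^h`, with `|C| = q^k` and
`1 ≤ k < n`, is additively equivalent to an additive code `D` possessing a generator
matrix `G` (a `kh × n` matrix over `F_q` whose rows form an `F_p`-basis of `D`, with rows
indexed by `Fin k × Fin h`) which, viewed as a `kh × nh` matrix over `F_p` by identifying
`F_q` with `F_p^h` via an additive (i.e. `F_p`-linear) bijection `φ`, has its first `kh`
columns equal to the identity matrix `I_{kh}`, and in which, for each `r ∈ {k+1,...,n}`
and `j ∈ {1,...,k}`, the `h × h` block over `F_p` in block-row `j` and block-column `r`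
is non-singular. -/
theorem additiveMDS_standard_generator_matrix
    (p h : ℕ) [Fact p.Prime]
    (F : Type*) [Field F] [Fintype F] [DecidableEq F]
    (hcard : Fintype.card F = p ^ h)
    (n k : ℕ) (hk : 1 ≤ k) (hkn : k < n)
    (C : AddSubgroup (Fin n → F))
    (hMDS : IsMDS F n (C : Set (Fin n → F)))
    (hCk : Nat.card C = (p ^ h) ^ k) :
    ∃ (D : AddSubgroup (Fin n → F)) (G : Matrix (Fin k × Fin h) (Fin n) F)
      (φ : F ≃+ (Fin h → ZMod p)),
      AddCodeEquiv F n (C : Set (Fin n → F)) (D : Set (Fin n → F)) ∧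
      -- the rows of `G` lie in `D` ...
      (∀ jt : Fin k × Fin h, G jt ∈ D) ∧
      -- ... they span `D` over `F_p` ...
      (∀ x ∈ D, ∃ m : Fin k × Fin h → ZMod p,
        x = ∑ jt : Fin k × Fin h, (m jt).val • G jt) ∧
      -- ... and they are linearly independent over `F_p`
      (∀ m m' : Fin k × Fin h → ZMod p,
        ∑ jt : Fin k × Fin h, (m jt).val • G jt =
          ∑ jt : Fin k × Fin h, (m' jt).val • G jt → m = m') ∧
      -- the first `kh` columns of the `kh × nh` matrix over `F_p` form `I_{kh}`
      (∀ (jt : Fin k × Fin h) (r : Fin n) (hr : (r : ℕ) < k) (s : Fin h),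
        φ (G jt r) s = if jt = (⟨(r : ℕ), hr⟩, s) then 1 else 0) ∧
      -- for `r ∈ {k+1,...,n}` and `j ∈ {1,...,k}` the `h × h` block is non-singular
      (∀ (j : Fin k) (r : Fin n), k ≤ (r : ℕ) →
        IsUnit (Matrix.of fun t s : Fin h => φ (G (j, t) r) s)) :=
  additiveMDS_standard_generator_matrix_general p h F hcard n k hkn C hMDS hCk
end
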